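/- arXiv:2105.04833 — 5 statements merged into one kernel-verified Lean document; each statement's English description precedes it below -/
import Mathlib

section
/- Let f : ℝ → ℝ be non-decreasing, let ν̄ ∈ ℝ, and suppose ν₁* ≤ ν̄ ≤ ν₂* (with ν₁* < ν₂*) satisfy: for all ν ≥ ν̄, (f(ν) - f(ν₁*))/(ν - ν₁*) ≤ (f(ν₂*) - f(ν₁*))/(ν₂* - ν₁*), and for all ν ≤ ν̄, (f(ν₂*) - f(ν₁*))/(ν₂* - ν₁*) ≤ (f(ν₂*) - f(ν))/(ν₂* - ν). Then the linear function g(ν) = f(ν₁*) + σ·(ν - ν₁*), where σ = (f(ν₂*) - f(ν₁*))/(ν₂* - ν₁*), satisfies g(ν) ≥ f(ν) for all ν ∈ ℝ. -/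
/-!
The line `g` through `(ν₁, f ν₁)` with slope `σ` also passes through `(ν₂, f ν₂)`. To the right
of `νbar` it lies above `f` because every chord from `ν₁` is at most as steep as `g`; to the left
of `νbar` because every chord ending at `ν₂` is at least as steep as `g`.
-/

open Set

section ChordSlope

variable {𝕜 : Type*} [Field 𝕜] [LinearOrder 𝕜] [IsStrictOrderedRing 𝕜] {f : 𝕜 → 𝕜} {a b x σ : 𝕜}

theorem le_add_mul_sub_of_div_sub_le (hax : a ≤ x) (h : (f x - f a) / (x - a) ≤ σ) :
    f x ≤ f a + σ * (x - a) := by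
  rcases hax.eq_or_lt with rfl | hlt
  · simp
  · linarith [(div_le_iff₀ (sub_pos.2 hlt)).1 h]

theorem le_sub_mul_sub_of_le_div_sub (hxb : x ≤ b) (h : σ ≤ (f b - f x) / (b - x)) :
    f x ≤ f b - σ * (b - x) := by
  rcases hxb.eq_or_lt with rfl | hlt
  · simp
  · linarith [(le_div_iff₀ (sub_pos.2 hlt)).1 h]

end ChordSlope

theorem stmt_0_general (f : ℝ → ℝ) (νbar ν₁ ν₂ : ℝ)
    (h12 : ν₁ < ν₂) (h1 : ν₁ ≤ νbar) (h2 : νbar ≤ ν₂)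
    (hA : ∀ ν, νbar ≤ ν → (f ν - f ν₁) / (ν - ν₁) ≤ (f ν₂ - f ν₁) / (ν₂ - ν₁))
    (hB : ∀ ν, ν ≤ νbar → (f ν₂ - f ν₁) / (ν₂ - ν₁) ≤ (f ν₂ - f ν) / (ν₂ - ν)) :
    ∀ ν : ℝ, f ν ≤ f ν₁ + (f ν₂ - f ν₁) / (ν₂ - ν₁) * (ν - ν₁) := by
  intro ν
  set σ := (f ν₂ - f ν₁) / (ν₂ - ν₁)
  have hσ : σ * (ν₂ - ν₁) = f ν₂ - f ν₁ := div_mul_cancel₀ _ (sub_ne_zero.2 h12.ne')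
  rcases le_total νbar ν with hν | hν
  · exact le_add_mul_sub_of_div_sub_le (h1.trans hν) (hA ν hν)
  · linarith [le_sub_mul_sub_of_le_div_sub (hν.trans h2) (hB ν hν)]

theorem stmt_0 (f : ℝ → ℝ) (hf : Monotone f) (νbar ν₁ ν₂ : ℝ)
    (h12 : ν₁ < ν₂) (h1 : ν₁ ≤ νbar) (h2 : νbar ≤ ν₂)
    (hA : ∀ ν, νbar ≤ ν → (f ν - f ν₁) / (ν - ν₁) ≤ (f ν₂ - f ν₁) / (ν₂ - ν₁))
    (hB : ∀ ν, ν ≤ νbar → (f ν₂ - f ν₁) / (ν₂ - ν₁) ≤ (f ν₂ - f ν) / (ν₂ - ν)) :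
    ∀ ν : ℝ, f ν ≤ f ν₁ + (f ν₂ - f ν₁) / (ν₂ - ν₁) * (ν - ν₁) :=
  stmt_0_general f νbar ν₁ ν₂ h12 h1 h2 hA hB
end

section
/- Let f : ℝ → ℝ be non-decreasing and let ν be a real-valued random variable with finite mean ν̄ = E[ν]. Suppose ν₁* < ν̄ < ν₂* are such that the line g through (ν₁*, f(ν₁*)) and (ν₂*, f(ν₂*)) satisfies g(ν) ≥ f(ν) for all ν. Then E[f(ν)] ≤ β f(ν₁*) + (1-β) f(ν₂*), where β = (ν₂* - ν̄)/(ν₂* - ν₁*). -/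
open MeasureTheory

theorem integral_comp_le_of_le_affine {Ω : Type*} [MeasurableSpace Ω] {μ : Measure Ω}
    [IsProbabilityMeasure μ] {f : ℝ → ℝ} {X : Ω → ℝ} {a c x₀ : ℝ}
    (hf : ∀ x, f x ≤ a + c * (x - x₀)) (hX : Integrable X μ)
    (hfX : Integrable (fun ω => f (X ω)) μ) :
    ∫ ω, f (X ω) ∂μ ≤ a + c * (∫ ω, X ω ∂μ - x₀) := by
  have hshift : Integrable (fun ω => c * (X ω - x₀)) μ :=
    (hX.sub (integrable_const x₀)).const_mul c
  calc ∫ ω, f (X ω) ∂μ ≤ ∫ ω, a + c * (X ω - x₀) ∂μ :=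
        integral_mono hfX ((integrable_const a).add hshift) fun ω => hf (X ω)
    _ = a + c * (∫ ω, X ω ∂μ - x₀) := by
      rw [integral_add (integrable_const a) hshift, integral_const_mul,
        integral_sub hX (integrable_const x₀)]
      simp

/-- For `x₁ = x₂` both sides are `f x₁`, because division by zero gives `0`. -/
theorem chord_eq_weighted_sum (f : ℝ → ℝ) (x₁ x₂ m : ℝ) :
    f x₁ + (f x₂ - f x₁) / (x₂ - x₁) * (m - x₁) =
      (x₂ - m) / (x₂ - x₁) * f x₁ + (1 - (x₂ - m) / (x₂ - x₁)) * f x₂ := by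
  rcases eq_or_ne x₂ x₁ with rfl | hne
  · simp
  · field_simp [sub_ne_zero.mpr hne]
    ring

theorem stmt_1_general {Ω : Type*} [MeasurableSpace Ω] (μ : Measure Ω) [IsProbabilityMeasure μ]
    (f : ℝ → ℝ) (X : Ω → ℝ) (hX : Integrable X μ)
    (hfX : Integrable (fun ω => f (X ω)) μ)
    (νbar ν₁ ν₂ : ℝ) (hmean : ∫ ω, X ω ∂μ = νbar)
    (hmaj : ∀ ν : ℝ, f ν ≤ f ν₁ + (f ν₂ - f ν₁) / (ν₂ - ν₁) * (ν - ν₁)) :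
    ∫ ω, f (X ω) ∂μ ≤
      (ν₂ - νbar) / (ν₂ - ν₁) * f ν₁ + (1 - (ν₂ - νbar) / (ν₂ - ν₁)) * f ν₂ := by
  rw [← chord_eq_weighted_sum, ← hmean]
  exact integral_comp_le_of_le_affine hmaj hX hfX

theorem stmt_1 {Ω : Type*} [MeasurableSpace Ω] (μ : Measure Ω) [IsProbabilityMeasure μ]
    (f : ℝ → ℝ) (hf : Monotone f) (X : Ω → ℝ) (hX : Integrable X μ)
    (hfX : Integrable (fun ω => f (X ω)) μ)
    (νbar ν₁ ν₂ : ℝ) (hmean : ∫ ω, X ω ∂μ = νbar)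
    (h1 : ν₁ < νbar) (h2 : νbar < ν₂)
    (hmaj : ∀ ν : ℝ, f ν ≤ f ν₁ + (f ν₂ - f ν₁) / (ν₂ - ν₁) * (ν - ν₁)) :
    ∫ ω, f (X ω) ∂μ ≤
      (ν₂ - νbar) / (ν₂ - ν₁) * f ν₁ + (1 - (ν₂ - νbar) / (ν₂ - ν₁)) * f ν₂ :=
  stmt_1_general μ f X hX hfX νbar ν₁ ν₂ hmean hmaj
end

section
/- Let f : ℝ → ℝ be non-decreasing and let A_ν > 0. Consider the problem of maximizing E[f(ν)] over distributions of a random variable ν ≥ 0 subject to E[ν] ≤ A_ν. If f is convex on [0, A_s] for some A_s > A_ν and constant equal to f(A_s) on [A_s, ∞), then the optimal value equals β f(0) + (1-β) f(A_s) with β = (A_s - A_ν)/A_s, achieved by the two-point distribution placing mass β at 0 and 1-β at A_s. -/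
/-! On `[0, A_s]` the convex `f` lies below its chord through `(0, f 0)` and `(A_s, f A_s)`;
beyond `A_s` it is constant, and the chord's slope is nonnegative by monotonicity. So `f` lies
below the affine function `f 0 + (f A_s - f 0) / A_s * x` on all of `[0, ∞)`, and integrating gives
`E[f(ν)] ≤ f 0 + (f A_s - f 0) / A_s * A_ν`. The law on `{0, A_s}` with mean exactly `A_ν` is
supported where `f` meets the chord, so it attains this bound. -/

open MeasureTheory ProbabilityTheory Set unitInterval

theorem ConvexOn.le_chord_of_eq_const_right {f : ℝ → ℝ} {a b : ℝ} (hab : a < b)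
    (hconv : ConvexOn ℝ (Icc a b) f) (hfab : f a ≤ f b) (hsat : ∀ x, b ≤ x → f x = f b)
    {x : ℝ} (hx : a ≤ x) : f x ≤ f a + (f b - f a) / (b - a) * (x - a) := by
  have hba : 0 < b - a := sub_pos.2 hab
  rcases le_or_gt x b with hxb | hbx
  · have hcomb : ((b - x) / (b - a)) • a + ((x - a) / (b - a)) • b = x := by
      simp only [smul_eq_mul]; field_simp; ring
    have hchord := hconv.2 (left_mem_Icc.2 hab.le) (right_mem_Icc.2 hab.le)
      (div_nonneg (sub_nonneg.2 hxb) hba.le) (div_nonneg (sub_nonneg.2 hx) hba.le)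
      (by field_simp; ring)
    rw [hcomb] at hchord
    calc f x ≤ (b - x) / (b - a) * f a + (x - a) / (b - a) * f b := hchord
      _ = f a + (f b - f a) / (b - a) * (x - a) := by field_simp; ring
  · have hslope : 0 ≤ (f b - f a) / (b - a) := div_nonneg (sub_nonneg.2 hfab) hba.le
    calc f x = f a + (f b - f a) / (b - a) * (b - a) := by
          rw [hsat x hbx.le, div_mul_cancel₀ _ hba.ne']; ring
      _ ≤ f a + (f b - f a) / (b - a) * (x - a) := by gcongr

theorem integral_le_of_ae_le_affine {Ω : Type*} [MeasurableSpace Ω] {μ : Measure Ω}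
    [IsProbabilityMeasure μ] {f X : Ω → ℝ} {p c m : ℝ} (hc : 0 ≤ c)
    (hfX : ∀ᵐ ω ∂μ, f ω ≤ p + c * X ω) (hf : Integrable f μ) (hX : Integrable X μ)
    (hm : ∫ ω, X ω ∂μ ≤ m) : ∫ ω, f ω ∂μ ≤ p + c * m :=
  calc ∫ ω, f ω ∂μ ≤ ∫ ω, p + c * X ω ∂μ :=
        integral_mono_ae hf ((integrable_const p).add (hX.const_mul c)) hfX
    _ = p + c * ∫ ω, X ω ∂μ := by
        rw [integral_add (integrable_const p) (hX.const_mul c), integral_const,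
          integral_const_mul, probReal_univ, one_smul]
    _ ≤ p + c * m := by gcongr

namespace ProbabilityTheory

theorem bernoulliMeasure_eq_ofReal_smul {α : Type*} [MeasurableSpace α] (x y : α) (p : I) :
    Ber(x, y, p) =
      ENNReal.ofReal p • Measure.dirac x + ENNReal.ofReal (1 - p) • Measure.dirac y := by
  have hsmul (q : I) (μ : Measure α) : toNNReal q • μ = ENNReal.ofReal q • μ := by
    rw [ENNReal.ofReal, Real.toNNReal_of_nonneg q.2.1]
    rfl
  rw [bernoulliMeasure_def, ← coe_symm_eq, hsmul, hsmul]

theorem ae_bernoulliMeasure_of {α : Type*} [MeasurableSpace α] [MeasurableSingletonClass α]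
    {P : α → Prop} {x y : α} (hx : P x) (hy : P y) (p : I) : ∀ᵐ z ∂Ber(x, y, p), P z := by
  rw [bernoulliMeasure_def, ae_add_measure_iff]
  exact ⟨Measure.ae_smul_measure (by simpa [ae_dirac_eq] using hx) _,
    Measure.ae_smul_measure (by simpa [ae_dirac_eq] using hy) _⟩

end ProbabilityTheory

theorem stmt_5 (f : ℝ → ℝ) (hf : Monotone f) (A_ν A_s : ℝ) (hAν : 0 < A_ν)
    (hAs : A_ν < A_s)
    (hconv : ConvexOn ℝ (Set.Icc 0 A_s) f)
    (hsat : ∀ x : ℝ, A_s ≤ x → f x = f A_s) :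
    let β : ℝ := (A_s - A_ν) / A_s
    let μ₀ : Measure ℝ :=
      ENNReal.ofReal β • Measure.dirac 0 + ENNReal.ofReal (1 - β) • Measure.dirac A_s
    IsGreatest
      {r : ℝ | ∃ μ : Measure ℝ, IsProbabilityMeasure μ ∧ (∀ᵐ x ∂μ, 0 ≤ x) ∧
        Integrable (fun x : ℝ => x) μ ∧ (∫ x, x ∂μ) ≤ A_ν ∧
        Integrable f μ ∧ r = ∫ x, f x ∂μ}
      (β * f 0 + (1 - β) * f A_s) ∧
    IsProbabilityMeasure μ₀ ∧ (∫ x, x ∂μ₀) ≤ A_ν ∧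
    (∫ x, f x ∂μ₀) = β * f 0 + (1 - β) * f A_s := by
  intro β μ₀
  have hAs₀ : 0 < A_s := hAν.trans hAs
  let p : I := ⟨β, div_nonneg (sub_pos.2 hAs).le hAs₀.le, (div_le_one hAs₀).2 (by linarith)⟩
  have hμ₀ : μ₀ = Ber(0, A_s, p) := (bernoulliMeasure_eq_ofReal_smul 0 A_s p).symm
  have hprob : IsProbabilityMeasure μ₀ := hμ₀ ▸ inferInstance
  have hmean : ∫ x, x ∂μ₀ = A_ν := by
    rw [hμ₀, integral_bernoulliMeasure]; simp only [p, β, smul_eq_mul]; field_simp; ring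
  have hvalue : ∫ x, f x ∂μ₀ = β * f 0 + (1 - β) * f A_s := by
    rw [hμ₀, integral_bernoulliMeasure]; rfl
  have hint (g : ℝ → ℝ) : Integrable g μ₀ := hμ₀ ▸ integrable_bernoulliMeasure _ _ _ _
  have hnonneg₀ : ∀ᵐ x ∂μ₀, 0 ≤ x := hμ₀ ▸ ae_bernoulliMeasure_of le_rfl hAs₀.le p
  refine ⟨⟨⟨μ₀, hprob, hnonneg₀, hint _, hmean.le, hint f, hvalue.symm⟩, ?_⟩,
    hprob, hmean.le, hvalue⟩
  rintro _ ⟨μ, hμ, hnonneg, hid, hμmean, hfμ, rfl⟩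
  have hslope : 0 ≤ (f A_s - f 0) / A_s := div_nonneg (sub_nonneg.2 (hf hAs₀.le)) hAs₀.le
  have hchord : ∀ᵐ x ∂μ, f x ≤ f 0 + (f A_s - f 0) / A_s * x := by
    filter_upwards [hnonneg] with x hx
    simpa using hconv.le_chord_of_eq_const_right hAs₀ (hf hAs₀.le) hsat hx
  calc ∫ x, f x ∂μ ≤ f 0 + (f A_s - f 0) / A_s * A_ν :=
        integral_le_of_ae_le_affine hslope hchord hfμ hid hμmean
    _ = β * f 0 + (1 - β) * f A_s := by simp only [β]; field_simp; ring
end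

section
/- Let φ : [0,∞) → ℝ be non-decreasing with φ(0) ≥ 0, let A_s > 0, and suppose φ(u) ≥ φ(A_s²)·(u/A_s²)² for all u ∈ [0, A_s²], with φ(u) = φ(A_s²) for u ≥ A_s². Let |g₁| ≥ |g₂| > 0, ρ_min = A_s²/|g₁|², ρ_max = A_s²/|g₂|², and Φ(ν) = φ(ν|g₁|²) + φ(ν|g₂|²). Then Φ(ρ_min)/ρ_min ≥ Φ(ρ_max)/ρ_max. -/
/-!
At `ρ_max` both rectennas are saturated, so `Φ(ρ_max) = 2 φ(s)` with `s = A_s²`. At `ρ_min` the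
first one is saturated and the second receives `s · g₂²/g₁²`, where quadratic growth gives at least
`φ(s) (g₂²/g₁²)²`. Writing `a = g₁²`, `b = g₂²`, the claim reduces to
`φ(s) · 2ab ≤ φ(s) (a² + b²)`, which holds because `φ(s) ≥ φ(0) ≥ 0`.
-/

theorem div_mul_le_of_quadratic_growth {φ : ℝ → ℝ} {s a b : ℝ} (hs : 0 < s) (ha : 0 < a)
    (hb : 0 ≤ b) (hba : b ≤ a) (hquad : ∀ u ∈ Set.Icc 0 s, φ s * (u / s) ^ 2 ≤ φ u) :
    φ s * (b / a) ^ 2 ≤ φ (s / a * b) := by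
  have hmem : s / a * b ∈ Set.Icc 0 s := by
    refine ⟨by positivity, ?_⟩
    calc s / a * b ≤ s / a * a := by gcongr
      _ = s := div_mul_cancel₀ s ha.ne'
  have hratio : s / a * b / s = b / a := by field_simp
  simpa [hratio] using hquad _ hmem

theorem slope_le_of_quadratic_growth_of_saturation {φ : ℝ → ℝ} {s a b : ℝ} (hs : 0 < s)
    (hb : 0 < b) (hba : b ≤ a) (hφs : 0 ≤ φ s)
    (hquad : ∀ u ∈ Set.Icc 0 s, φ s * (u / s) ^ 2 ≤ φ u)
    (hsat : ∀ u, s ≤ u → φ u = φ s) :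
    (φ (s / b * a) + φ (s / b * b)) / (s / b) ≤ (φ (s / a * a) + φ (s / a * b)) / (s / a) := by
  have ha : 0 < a := hb.trans_le hba
  have hsat_a : φ (s / b * a) = φ s := hsat _ <| by
    calc s = s / b * b := (div_mul_cancel₀ s hb.ne').symm
      _ ≤ s / b * a := by gcongr
  have hgrowth := div_mul_le_of_quadratic_growth hs ha hb.le hba hquad
  rw [hsat_a, div_mul_cancel₀ s hb.ne', div_mul_cancel₀ s ha.ne']
  calc (φ s + φ s) / (s / b) = φ s * (2 * a * b) / (a * s) := by field_simp; ring
    _ ≤ φ s * (a ^ 2 + b ^ 2) / (a * s) := by gcongr; exact two_mul_le_add_sq a b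
    _ = (φ s + φ s * (b / a) ^ 2) / (s / a) := by field_simp
    _ ≤ (φ s + φ (s / a * b)) / (s / a) := by gcongr

theorem stmt_7 (φ : ℝ → ℝ) (hmono : MonotoneOn φ (Set.Ici 0)) (hφ0 : 0 ≤ φ 0)
    (A_s : ℝ) (hAs : 0 < A_s)
    (hquad : ∀ u ∈ Set.Icc (0:ℝ) (A_s ^ 2), φ (A_s ^ 2) * (u / A_s ^ 2) ^ 2 ≤ φ u)
    (hsat : ∀ u : ℝ, A_s ^ 2 ≤ u → φ u = φ (A_s ^ 2))
    (g₁ g₂ : ℝ) (hg2 : 0 < g₂) (hg12 : g₂ ≤ g₁) :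
    let ρmin : ℝ := A_s ^ 2 / g₁ ^ 2
    let ρmax : ℝ := A_s ^ 2 / g₂ ^ 2
    let Φ : ℝ → ℝ := fun ν => φ (ν * g₁ ^ 2) + φ (ν * g₂ ^ 2)
    Φ ρmax / ρmax ≤ Φ ρmin / ρmin := by
  have hs : 0 < A_s ^ 2 := by positivity
  have hφs : 0 ≤ φ (A_s ^ 2) := hφ0.trans (hmono Set.self_mem_Ici hs.le hs.le)
  have hgain : g₂ ^ 2 ≤ g₁ ^ 2 := pow_le_pow_left₀ hg2.le hg12 2
  exact slope_le_of_quadratic_growth_of_saturation hs (by positivity) hgain hφs hquad hsat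
end

section
/- Let g ∈ ℂⁿ be nonzero, φ : [0,∞) → ℝ non-decreasing and measurable, P_x > 0, and let Φ(ν) = φ(ν‖g‖²). Then sup over distributions of random vectors x ∈ ℂⁿ with E[‖x‖²] ≤ P_x of E[φ(|⟨g,x⟩|²)] equals sup over distributions of nonnegative random variables ν with E[ν] ≤ P_x of E[Φ(ν)]. -/
open MeasureTheory
open scoped InnerProductSpace

/-!
Projecting onto `g` loses nothing: `ν = |⟨g, x⟩|² / ‖g‖²` satisfies `ν ≤ ‖x‖²` (Cauchy–Schwarz)
and `ν ‖g‖² = |⟨g, x⟩|²`, so pushing an input distribution forward along `x ↦ ν` gives a power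
distribution with the same harvested value and no larger mean power. Conversely, maximum ratio
transmission `x = √ν g / ‖g‖` realises every nonnegative power distribution with `‖x‖² = ν`.
Hence the two sets of achievable values coincide, not only their suprema.
-/

namespace MisoPowerReduction

variable {𝕜 E : Type*} [RCLike 𝕜] [NormedAddCommGroup E] [InnerProductSpace 𝕜 E]

variable (𝕜) in
noncomputable def mrtInput (g : E) (ν : ℝ) : E := ((√ν / ‖g‖ : ℝ) : 𝕜) • g

variable (𝕜) in
noncomputable def alignedPower (g x : E) : ℝ := ‖⟪g, x⟫_𝕜‖ ^ 2 / ‖g‖ ^ 2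

variable (𝕜) in
theorem continuous_mrtInput (g : E) : Continuous (mrtInput 𝕜 g) := by
  unfold mrtInput
  fun_prop

theorem norm_mrtInput_sq {g : E} (hg : g ≠ 0) {ν : ℝ} (hν : 0 ≤ ν) :
    ‖mrtInput 𝕜 g ν‖ ^ 2 = ν := by
  have : ‖g‖ ≠ 0 := norm_ne_zero_iff.mpr hg
  rw [mrtInput, norm_smul, RCLike.norm_ofReal, abs_of_nonneg (by positivity), mul_pow, div_pow,
    Real.sq_sqrt hν]
  field_simp

theorem norm_inner_mrtInput_sq {g : E} (hg : g ≠ 0) {ν : ℝ} (hν : 0 ≤ ν) :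
    ‖⟪g, mrtInput 𝕜 g ν⟫_𝕜‖ ^ 2 = ν * ‖g‖ ^ 2 := by
  have : ‖g‖ ≠ 0 := norm_ne_zero_iff.mpr hg
  rw [mrtInput, inner_smul_right, inner_self_eq_norm_sq_to_K, norm_mul, norm_pow,
    RCLike.norm_ofReal, RCLike.norm_ofReal, abs_of_nonneg (by positivity), abs_norm, mul_pow,
    div_pow, Real.sq_sqrt hν]
  field_simp

variable (𝕜) in
theorem continuous_alignedPower (g : E) : Continuous (alignedPower 𝕜 g) := by
  unfold alignedPower
  fun_prop

theorem alignedPower_nonneg (g x : E) : 0 ≤ alignedPower 𝕜 g x := by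
  unfold alignedPower
  positivity

theorem alignedPower_le_norm_sq {g : E} (hg : g ≠ 0) (x : E) : alignedPower 𝕜 g x ≤ ‖x‖ ^ 2 := by
  rw [alignedPower, div_le_iff₀ (by positivity)]
  calc ‖⟪g, x⟫_𝕜‖ ^ 2 ≤ (‖g‖ * ‖x‖) ^ 2 := by gcongr; exact norm_inner_le_norm g x
    _ = ‖x‖ ^ 2 * ‖g‖ ^ 2 := by ring

theorem alignedPower_mul_norm_sq {g : E} (hg : g ≠ 0) (x : E) :
    alignedPower 𝕜 g x * ‖g‖ ^ 2 = ‖⟪g, x⟫_𝕜‖ ^ 2 := by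
  have : ‖g‖ ≠ 0 := norm_ne_zero_iff.mpr hg
  rw [alignedPower]
  field_simp

def powerInputValues (Φ : ℝ → ℝ) (P : ℝ) : Set ℝ :=
  {r | ∃ μ : Measure ℝ, IsProbabilityMeasure μ ∧ (∀ᵐ ν ∂μ, 0 ≤ ν) ∧
    Integrable (fun ν : ℝ => ν) μ ∧ (∫ ν, ν ∂μ) ≤ P ∧ Integrable Φ μ ∧ r = ∫ ν, Φ ν ∂μ}

variable [MeasurableSpace E] [BorelSpace E]

variable (𝕜) in
def vectorInputValues (g : E) (φ : ℝ → ℝ) (P : ℝ) : Set ℝ :=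
  {r | ∃ μ : Measure E, IsProbabilityMeasure μ ∧ Integrable (fun x => ‖x‖ ^ 2) μ ∧
    (∫ x, ‖x‖ ^ 2 ∂μ) ≤ P ∧ Integrable (fun x => φ (‖⟪g, x⟫_𝕜‖ ^ 2)) μ ∧
    r = ∫ x, φ (‖⟪g, x⟫_𝕜‖ ^ 2) ∂μ}

theorem vectorInputValues_subset_powerInputValues {g : E} (hg : g ≠ 0) {φ : ℝ → ℝ}
    (hφ : Measurable φ) (P : ℝ) :
    vectorInputValues 𝕜 g φ P ⊆ powerInputValues (fun ν => φ (ν * ‖g‖ ^ 2)) P := by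
  rintro r ⟨μ, hμ, hint_norm, hnorm_le, hint_φ, rfl⟩
  have hF := (continuous_alignedPower 𝕜 g).aemeasurable (μ := μ)
  have hΦ : Measurable fun ν : ℝ => φ (ν * ‖g‖ ^ 2) := hφ.comp (measurable_mul_const _)
  have hΦF : (fun ν => φ (ν * ‖g‖ ^ 2)) ∘ alignedPower 𝕜 g = fun x => φ (‖⟪g, x⟫_𝕜‖ ^ 2) := by
    ext x
    simp only [Function.comp_apply, alignedPower_mul_norm_sq hg]
  have hint_F : Integrable (alignedPower 𝕜 g) μ := by
    refine hint_norm.mono (continuous_alignedPower 𝕜 g).aestronglyMeasurable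
      (.of_forall fun x => ?_)
    rw [Real.norm_of_nonneg (alignedPower_nonneg g x), Real.norm_of_nonneg (by positivity)]
    exact alignedPower_le_norm_sq hg x
  refine ⟨μ.map (alignedPower 𝕜 g), Measure.isProbabilityMeasure_map hF, ?_, ?_, ?_, ?_, ?_⟩
  · exact (ae_map_iff hF measurableSet_Ici).mpr (.of_forall (alignedPower_nonneg g))
  · exact (integrable_map_measure aestronglyMeasurable_id hF).mpr hint_F
  · exact (integral_map hF aestronglyMeasurable_id).trans_le
      ((integral_mono hint_F hint_norm (alignedPower_le_norm_sq hg)).trans hnorm_le)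
  · rwa [integrable_map_measure hΦ.aestronglyMeasurable hF, hΦF]
  · rw [integral_map hF hΦ.aestronglyMeasurable]
    exact congrArg (integral μ) hΦF.symm

theorem powerInputValues_subset_vectorInputValues {g : E} (hg : g ≠ 0) {φ : ℝ → ℝ}
    (hφ : Measurable φ) (P : ℝ) :
    powerInputValues (fun ν => φ (ν * ‖g‖ ^ 2)) P ⊆ vectorInputValues 𝕜 g φ P := by
  rintro r ⟨μ, hμ, hnonneg, hint_id, hmean_le, hint_Φ, rfl⟩
  have hT := (continuous_mrtInput 𝕜 g).aemeasurable (μ := μ)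
  have hnorm : Measurable fun x : E => ‖x‖ ^ 2 := by fun_prop
  have hψ : Measurable fun x : E => φ (‖⟪g, x⟫_𝕜‖ ^ 2) := hφ.comp (by fun_prop)
  have hnorm_T : (fun ν => ‖mrtInput 𝕜 g ν‖ ^ 2) =ᵐ[μ] fun ν => ν := by
    filter_upwards [hnonneg] with ν hν using norm_mrtInput_sq hg hν
  have hψ_T : (fun ν => φ (‖⟪g, mrtInput 𝕜 g ν⟫_𝕜‖ ^ 2)) =ᵐ[μ] fun ν => φ (ν * ‖g‖ ^ 2) := by
    filter_upwards [hnonneg] with ν hν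
    rw [norm_inner_mrtInput_sq hg hν]
  refine ⟨μ.map (mrtInput 𝕜 g), Measure.isProbabilityMeasure_map hT, ?_, ?_, ?_, ?_⟩
  · exact (integrable_map_measure hnorm.aestronglyMeasurable hT).mpr
      (hint_id.congr hnorm_T.symm)
  · rwa [integral_map hT hnorm.aestronglyMeasurable, integral_congr_ae hnorm_T]
  · exact (integrable_map_measure hψ.aestronglyMeasurable hT).mpr
      (hint_Φ.congr hψ_T.symm)
  · exact ((integral_map hT hψ.aestronglyMeasurable).trans (integral_congr_ae hψ_T)).symm

end MisoPowerReduction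

open MisoPowerReduction

theorem stmt_12_general {n : ℕ} (g : EuclideanSpace ℂ (Fin n)) (hg : g ≠ 0)
    [MeasurableSpace (EuclideanSpace ℂ (Fin n))] [BorelSpace (EuclideanSpace ℂ (Fin n))]
    (φ : ℝ → ℝ) (hφm : Measurable φ)
    (P_x : ℝ) :
    sSup {r : ℝ | ∃ μ : Measure (EuclideanSpace ℂ (Fin n)),
        IsProbabilityMeasure μ ∧ Integrable (fun x => ‖x‖ ^ 2) μ ∧
        (∫ x, ‖x‖ ^ 2 ∂μ) ≤ P_x ∧
        Integrable (fun x => φ (‖(inner ℂ g x : ℂ)‖ ^ 2)) μ ∧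
        r = ∫ x, φ (‖(inner ℂ g x : ℂ)‖ ^ 2) ∂μ} =
    sSup {r : ℝ | ∃ μ : Measure ℝ,
        IsProbabilityMeasure μ ∧ (∀ᵐ ν ∂μ, 0 ≤ ν) ∧
        Integrable (fun ν : ℝ => ν) μ ∧ (∫ ν, ν ∂μ) ≤ P_x ∧
        Integrable (fun ν : ℝ => φ (ν * ‖g‖ ^ 2)) μ ∧
        r = ∫ ν, φ (ν * ‖g‖ ^ 2) ∂μ} :=
  congrArg sSup <| (vectorInputValues_subset_powerInputValues hg hφm P_x).antisymm
    (powerInputValues_subset_vectorInputValues hg hφm P_x)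

theorem stmt_12 {n : ℕ} (g : EuclideanSpace ℂ (Fin n)) (hg : g ≠ 0)
    [MeasurableSpace (EuclideanSpace ℂ (Fin n))] [BorelSpace (EuclideanSpace ℂ (Fin n))]
    (φ : ℝ → ℝ) (hφ : MonotoneOn φ (Set.Ici 0)) (hφm : Measurable φ)
    (P_x : ℝ) (hP : 0 < P_x) :
    sSup {r : ℝ | ∃ μ : Measure (EuclideanSpace ℂ (Fin n)),
        IsProbabilityMeasure μ ∧ Integrable (fun x => ‖x‖ ^ 2) μ ∧
        (∫ x, ‖x‖ ^ 2 ∂μ) ≤ P_x ∧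
        Integrable (fun x => φ (‖(inner ℂ g x : ℂ)‖ ^ 2)) μ ∧
        r = ∫ x, φ (‖(inner ℂ g x : ℂ)‖ ^ 2) ∂μ} =
    sSup {r : ℝ | ∃ μ : Measure ℝ,
        IsProbabilityMeasure μ ∧ (∀ᵐ ν ∂μ, 0 ≤ ν) ∧
        Integrable (fun ν : ℝ => ν) μ ∧ (∫ ν, ν ∂μ) ≤ P_x ∧
        Integrable (fun ν : ℝ => φ (ν * ‖g‖ ^ 2)) μ ∧
        r = ∫ ν, φ (ν * ‖g‖ ^ 2) ∂μ} :=
  stmt_12_general g hg φ hφm P_x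
end
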